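/- arXiv:1907.01397 — 3 statements merged into one kernel-verified Lean document; each statement's English description precedes it below -/
import Mathlib

section
/- For a degree-$k$ polynomial $p$ on $\mathbb{R}$ and nested intervals $I_0 = [a, a+\delta] \subseteq I = [b, b+H]$ with $\delta > 0$, the $L^2$ norms satisfy $\|p\|_{L^2(I)}^2 \leq C(k) \, (H/\delta)^{2k+1} \, \|p\|_{L^2(I_0)}^2$ for a constant $C(k)$ depending only on $k$. -/
/-!
On polynomials of degree `≤ k`, `q ↦ ∫₀¹ q²` is a positive definite quadratic form in the
coefficient vector, so by compactness of the unit sphere it dominates the squared sup norm of the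
coefficients. Hence `q(x)² ≤ K R^{2k} ∫₀¹ q²` for `|x| ≤ R` with `R ≥ 1`; integrating over an
interval of length `R` containing `[0, 1]` and transporting by the affine map `[0, 1] → [a, a + δ]`
gives the claim with `R = H / δ`.
-/

open Polynomial intervalIntegral

theorem exists_pos_mul_norm_sq_le_of_sq_homogeneous {E : Type*} [NormedAddCommGroup E]
    [NormedSpace ℝ E] [FiniteDimensional ℝ E] {f : E → ℝ} (hf : Continuous f)
    (hsmul : ∀ (t : ℝ) (c : E), f (t • c) = t ^ 2 * f c) (hpos : ∀ c, c ≠ 0 → 0 < f c) :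
    ∃ m, 0 < m ∧ ∀ c, m * ‖c‖ ^ 2 ≤ f c := by
  have hf0 : f 0 = 0 := by simpa using hsmul 0 0
  rcases subsingleton_or_nontrivial E with hE | hE
  · exact ⟨1, one_pos, fun c => by simp [Subsingleton.elim c 0, hf0]⟩
  obtain ⟨c₀, hc₀, hmin⟩ := (isCompact_sphere (0 : E) 1).exists_isMinOn
    (NormedSpace.sphere_nonempty.mpr zero_le_one) hf.continuousOn
  have hc₀_ne : c₀ ≠ 0 := ne_zero_of_mem_unit_sphere ⟨c₀, hc₀⟩
  refine ⟨f c₀, hpos c₀ hc₀_ne, fun c => ?_⟩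
  rcases eq_or_ne c 0 with rfl | hc
  · simp [hf0]
  have hn : ‖c‖ ≠ 0 := norm_ne_zero_iff.mpr hc
  have hunit : ‖c‖⁻¹ • c ∈ Metric.sphere (0 : E) 1 := by
    rw [mem_sphere_zero_iff_norm, norm_smul, norm_inv, norm_norm, inv_mul_cancel₀ hn]
  calc f c₀ * ‖c‖ ^ 2 ≤ f (‖c‖⁻¹ • c) * ‖c‖ ^ 2 := by gcongr; exact hmin hunit
    _ = f c := by rw [hsmul, inv_pow]; field_simp

theorem Polynomial.integral_sq_eval_pos {p : ℝ[X]} (hp : p ≠ 0) {a b : ℝ} (hab : a < b) :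
    0 < ∫ x in a..b, p.eval x ^ 2 := by
  have hroots : MeasureTheory.volume {x | p.IsRoot x} = 0 :=
    (finite_setOfPred_isRoot hp).measure_zero _
  have hsupp : Function.support (fun x => p.eval x ^ 2) ∩ Set.Ioc a b
      = Set.Ioc a b \ {x | p.IsRoot x} := by
    ext x; simp [and_comm]
  rw [integral_pos_iff_support_of_nonneg_ae (Filter.Eventually.of_forall fun x => sq_nonneg _)
    ((p.continuous.pow 2).intervalIntegrable a b), hsupp, MeasureTheory.measure_sdiff_null hroots]
  exact ⟨hab, by simpa using hab⟩

theorem exists_pos_mul_norm_sq_le_integral_sq_sum (n : ℕ) :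
    ∃ m, 0 < m ∧ ∀ c : Fin n → ℝ,
      m * ‖c‖ ^ 2 ≤ ∫ x in (0 : ℝ)..1, (∑ i, c i * x ^ (i : ℕ)) ^ 2 := by
  refine exists_pos_mul_norm_sq_le_of_sq_homogeneous ?_ (fun t c => ?_) (fun c hc => ?_)
  · exact continuous_parametric_intervalIntegral_of_continuous' (by fun_prop) 0 1
  · simp_rw [Pi.smul_apply, smul_eq_mul, mul_assoc, ← Finset.mul_sum, mul_pow]
    exact integral_const_mul _ _
  · set p := (degreeLTEquiv ℝ n).symm c
    have hp : degreeLTEquiv ℝ n ⟨p, p.2⟩ = c := (degreeLTEquiv ℝ n).apply_symm_apply c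
    have hp0 : (p : ℝ[X]) ≠ 0 := by
      rwa [Ne, ← degreeLTEquiv_eq_zero_iff_eq_zero p.2, hp]
    simpa only [eval_eq_sum_degreeLTEquiv p.2, hp] using integral_sq_eval_pos hp0 one_pos

theorem abs_sum_mul_pow_le {k : ℕ} (c : Fin (k + 1) → ℝ) {x R : ℝ} (hR : 1 ≤ R) (hx : |x| ≤ R) :
    |∑ i, c i * x ^ (i : ℕ)| ≤ (k + 1) * ‖c‖ * R ^ k := by
  have hterm : ∀ i : Fin (k + 1), |c i * x ^ (i : ℕ)| ≤ ‖c‖ * R ^ k := fun i => by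
    rw [abs_mul, abs_pow]
    gcongr
    · exact norm_le_pi_norm c i
    · exact (pow_le_pow_left₀ (abs_nonneg x) hx _).trans (pow_le_pow_right₀ hR i.is_le)
  calc |∑ i, c i * x ^ (i : ℕ)| ≤ ∑ i, |c i * x ^ (i : ℕ)| := Finset.abs_sum_le_sum_abs _ _
    _ ≤ ∑ _i : Fin (k + 1), ‖c‖ * R ^ k := Finset.sum_le_sum fun i _ => hterm i
    _ = (k + 1) * ‖c‖ * R ^ k := by simp [mul_assoc]

theorem exists_sq_eval_le_integral_unit_interval (k : ℕ) :
    ∃ K, 0 < K ∧ ∀ p : ℝ[X], p.natDegree ≤ k → ∀ x R : ℝ, 1 ≤ R → |x| ≤ R →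
      p.eval x ^ 2 ≤ K * R ^ (2 * k) * ∫ t in (0 : ℝ)..1, p.eval t ^ 2 := by
  obtain ⟨m, hm, hcoeff⟩ := exists_pos_mul_norm_sq_le_integral_sq_sum (k + 1)
  refine ⟨(k + 1) ^ 2 / m, by positivity, fun p hp x R hR hx => ?_⟩
  have hp' : p ∈ degreeLT ℝ (k + 1) := by
    rw [degreeLT_succ_eq_degreeLE, mem_degreeLE]
    exact natDegree_le_iff_degree_le.mp hp
  set c := degreeLTEquiv ℝ (k + 1) ⟨p, hp'⟩
  have hc : ‖c‖ ^ 2 ≤ (∫ t in (0 : ℝ)..1, p.eval t ^ 2) / m := by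
    rw [le_div_iff₀ hm, mul_comm]
    simpa only [eval_eq_sum_degreeLTEquiv hp'] using hcoeff c
  calc p.eval x ^ 2 = |∑ i, c i * x ^ (i : ℕ)| ^ 2 := by
        rw [sq_abs, eval_eq_sum_degreeLTEquiv hp']
    _ ≤ ((k + 1) * ‖c‖ * R ^ k) ^ 2 := by gcongr; exact abs_sum_mul_pow_le c hR hx
    _ = (k + 1) ^ 2 * R ^ (2 * k) * ‖c‖ ^ 2 := by ring
    _ ≤ (k + 1) ^ 2 * R ^ (2 * k) * ((∫ t in (0 : ℝ)..1, p.eval t ^ 2) / m) := by gcongr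
    _ = (k + 1) ^ 2 / m * R ^ (2 * k) * ∫ t in (0 : ℝ)..1, p.eval t ^ 2 := by ring

theorem exists_integral_sq_le_integral_unit_interval (k : ℕ) :
    ∃ K, 0 < K ∧ ∀ p : ℝ[X], p.natDegree ≤ k → ∀ s R : ℝ, s ≤ 0 → 1 ≤ s + R →
      ∫ x in s..s + R, p.eval x ^ 2 ≤ K * R ^ (2 * k + 1) * ∫ t in (0 : ℝ)..1, p.eval t ^ 2 := by
  obtain ⟨K, hK, hpt⟩ := exists_sq_eval_le_integral_unit_interval k
  refine ⟨K, hK, fun p hp s R hs hsR => ?_⟩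
  calc ∫ x in s..s + R, p.eval x ^ 2
      ≤ ∫ _ in s..s + R, K * R ^ (2 * k) * ∫ t in (0 : ℝ)..1, p.eval t ^ 2 :=
        integral_mono_on (by linarith) ((p.continuous.pow 2).intervalIntegrable _ _)
          intervalIntegrable_const fun x hx =>
            hpt p hp x R (by linarith) (abs_le.mpr ⟨by linarith [hx.1], by linarith [hx.2]⟩)
    _ = K * R ^ (2 * k + 1) * ∫ t in (0 : ℝ)..1, p.eval t ^ 2 := by
        rw [integral_const, smul_eq_mul, add_sub_cancel_left]; ring

theorem Polynomial.integral_sq_eval_comp_affine (p : ℝ[X]) {δ : ℝ} (hδ : δ ≠ 0) (a u v : ℝ) :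
    ∫ t in u..v, (p.comp (C δ * X + C a)).eval t ^ 2
      = δ⁻¹ * ∫ x in δ * u + a..δ * v + a, p.eval x ^ 2 := by
  simp only [eval_comp, eval_add, eval_mul, eval_C, eval_X]
  exact integral_comp_mul_add (fun x => p.eval x ^ 2) hδ a

/-- One-dimensional polynomial norm comparison: for every `k` there is a constant `C(k)`
such that for every polynomial `p` of degree at most `k` and nested intervals
`[a, a+δ] ⊆ [b, b+H]` with `δ > 0`, one has
`‖p‖²_{L²([b,b+H])} ≤ C(k) (H/δ)^{2k+1} ‖p‖²_{L²([a,a+δ])}`. -/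
theorem stmt2 (k : ℕ) :
    ∃ C : ℝ, 0 < C ∧ ∀ (p : Polynomial ℝ), p.natDegree ≤ k →
      ∀ a b δ H : ℝ, 0 < δ → Set.Icc a (a + δ) ⊆ Set.Icc b (b + H) →
        (∫ x in b..(b + H), (p.eval x) ^ 2)
          ≤ C * (H / δ) ^ (2 * k + 1) * ∫ x in a..(a + δ), (p.eval x) ^ 2 := by
  obtain ⟨K, hK, hunit⟩ := exists_integral_sq_le_integral_unit_interval k
  refine ⟨K, hK, fun p hp a b δ H hδ hsub => ?_⟩
  obtain ⟨hba, hab⟩ := (Set.Icc_subset_Icc_iff (by linarith)).mp hsub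
  have hq : (p.comp (C δ * X + C a)).natDegree ≤ k := by
    rwa [natDegree_comp, natDegree_linear hδ.ne', mul_one]
  have key := hunit _ hq ((b - a) / δ) (H / δ)
    (div_nonpos_of_nonpos_of_nonneg (by linarith) hδ.le)
    (by rw [← add_div, le_div_iff₀ hδ]; linarith)
  have hb : δ * ((b - a) / δ) + a = b := by field_simp; ring
  have hbH : δ * ((b - a) / δ + H / δ) + a = b + H := by field_simp; ring
  simp only [integral_sq_eval_comp_affine p hδ.ne', hb, hbH, mul_zero, zero_add, mul_one,
    add_comm δ a] at key
  rwa [mul_left_comm, mul_le_mul_iff_right₀ (inv_pos.mpr hδ)] at key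
end

section
/- Let $e = [0, h_e] \times \{0\}$ be an edge of a convex polygon $T \subset \mathbb{R}^2$, and let $\lambda \in P_1(\mathbb{R}^2)$ be the affine function vanishing on a line $\ell$ making angle $\pi - \alpha$ with $e$ (with $0 < \alpha_0 \leq \alpha \leq \pi - \alpha_0$) and normalized so that $\lambda = 1$ at the barycenter (midpoint) of $e$. If $h_e \geq h_T/4$, where $h_T = \mathrm{diam}(T)$, then $\max_{x \in T} \lambda(x) \leq 8/\sin \alpha_0$. -/
/-! The affine function is `2/(hₑ sin α)` times the projection of `p` onto a unit vector,
so by Cauchy–Schwarz it is at most `2 |p| / (hₑ sin α) ≤ 2 h_T / (hₑ sin α) ≤ 8 / sin α`. -/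

open Real

lemma mul_sin_add_mul_cos_le_sqrt (x y α : ℝ) : x * sin α + y * cos α ≤ √(x ^ 2 + y ^ 2) := by
  have cauchy_schwarz : (x * sin α + y * cos α) ^ 2 ≤ x ^ 2 + y ^ 2 := by
    nlinarith [sq_nonneg (x * cos α - y * sin α), sin_sq_add_cos_sq α]
  exact (le_abs_self _).trans (abs_le_sqrt cauchy_schwarz)

lemma two_mul_div_le_of_le_four_mul {a he s : ℝ} (hhe : 0 < he) (hs : 0 < s)
    (ha : a ≤ 4 * he) : 2 * a / (he * s) ≤ 8 / s :=
  calc 2 * a / (he * s) ≤ 2 * (4 * he) / (he * s) := by gcongr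
    _ = 8 / s := by field_simp; ring

theorem stmt3_general (T : Set (ℝ × ℝ)) (he hT α α₀ : ℝ)
    (hdiam : ∀ p ∈ T, Real.sqrt (p.1 ^ 2 + p.2 ^ 2) ≤ hT)
    (hsin0 : 0 < Real.sin α₀) (hsin : Real.sin α₀ ≤ Real.sin α)
    (hhe : 0 < he) (hle : hT / 4 ≤ he) :
    ∀ p ∈ T, 2 * (p.1 * Real.sin α + p.2 * Real.cos α) / (he * Real.sin α)
      ≤ 8 / Real.sin α₀ := by
  intro p hp
  have hproj : p.1 * sin α + p.2 * cos α ≤ 4 * he :=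
    (mul_sin_add_mul_cos_le_sqrt p.1 p.2 α).trans ((hdiam p hp).trans (by linarith))
  calc 2 * (p.1 * sin α + p.2 * cos α) / (he * sin α) ≤ 8 / sin α :=
        two_mul_div_le_of_le_four_mul hhe (hsin0.trans_le hsin) hproj
    _ ≤ 8 / sin α₀ := by gcongr

/-- The edge `e = [0,hₑ]×{0}` of a convex polygon `T` has its vertex at the origin,
where a neighboring edge meets it at interior angle `π - α`; the affine function
`λ(x,y) = 2(x sin α + y cos α)/(hₑ sin α)` vanishes on the line of the neighboring edge
and equals `1` at the midpoint of `e`.  If every point of `T` is within distance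
`h_T ≤ 4 hₑ` of the vertex and `sin α ≥ sin α₀ > 0`, then `λ ≤ 8 / sin α₀` on `T`. -/
theorem stmt3 (T : Set (ℝ × ℝ)) (he hT α α₀ : ℝ)
    (hconv : Convex ℝ T) (h0 : ((0 : ℝ), (0 : ℝ)) ∈ T)
    (hdiam : ∀ p ∈ T, Real.sqrt (p.1 ^ 2 + p.2 ^ 2) ≤ hT)
    (hsin0 : 0 < Real.sin α₀) (hsin : Real.sin α₀ ≤ Real.sin α)
    (hhe : 0 < he) (hle : hT / 4 ≤ he) :
    ∀ p ∈ T, 2 * (p.1 * Real.sin α + p.2 * Real.cos α) / (he * Real.sin α)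
      ≤ 8 / Real.sin α₀ :=
  stmt3_general T he hT α α₀ hdiam hsin0 hsin hhe hle
end

section
/- Let $T_0 = [a, a+\delta] \times [0, \delta] \subset \mathbb{R}^2$ be a square of side $\delta$ whose bottom side lies in the interior of an edge $e$ of a convex polygon $T$, with $\delta = h_e/16$ and $e$ of length $h_e$, the bottom side of $T_0$ centered at the midpoint of $e$. Let $\lambda \in P_1(\mathbb{R}^2)$ vanish on a neighboring edge $e_i$ of $e$ meeting $e$ at interior angle $\pi - \alpha_i$ with $\alpha_i \leq \pi/2$, normalized so $\lambda = 1$ at the midpoint of $e$. Then $\lambda \geq 15/16$ on $T_0$. -/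
/-!
With `e = [0, hₑ] × {0}` and the vertex shared with `eᵢ` at the origin,
`λ(x, y) = 2 (x sin α + y cos α) / (hₑ sin α)`. In the direction `(0, 1)` orthogonal to `e`
it grows at the rate `2 cot α / hₑ ≥ 0`, because `α ≤ π / 2`. So on `T₀` it is at least its
value `2x / hₑ` on `e`, and `x ≥ hₑ / 2 - hₑ / 32` there.
-/

open Real

lemma two_mul_div_le_of_cos_nonneg {he α : ℝ} (hhe : 0 < he) (hsin : 0 < sin α)
    (hcos : 0 ≤ cos α) (x : ℝ) {y : ℝ} (hy : 0 ≤ y) :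
    2 * x / he ≤ 2 * (x * sin α + y * cos α) / (he * sin α) := by
  have hslope : 0 ≤ 2 * (y * cos α) / (he * sin α) := by positivity
  calc 2 * x / he = 2 * (x * sin α) / (he * sin α) := by field_simp
    _ ≤ 2 * (x * sin α) / (he * sin α) + 2 * (y * cos α) / (he * sin α) :=
      le_add_of_nonneg_right hslope
    _ = 2 * (x * sin α + y * cos α) / (he * sin α) := by ring

/-- Lower bound for the hat function on the interior square `T₀`:  the edge
`e = [0,hₑ]×{0}` meets its neighboring edge `eᵢ` at the origin with interior angle
`π - αᵢ`, `0 < αᵢ ≤ π/2`; the affine function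
`λ(x,y) = 2(x sin αᵢ + y cos αᵢ)/(hₑ sin αᵢ)` vanishes on the line of `eᵢ` and equals `1`
at the midpoint of `e`.  On the square `T₀` of side `δ = hₑ/16` sitting on the middle of
`e`, one has `λ ≥ 15/16`. -/
theorem stmt16 (he α : ℝ) (hhe : 0 < he) (hα : 0 < α) (hα2 : α ≤ Real.pi / 2) :
    ∀ x y : ℝ,
      he / 2 - (he / 16) / 2 ≤ x → x ≤ he / 2 + (he / 16) / 2 →
      0 ≤ y → y ≤ he / 16 →
      (15 : ℝ) / 16 ≤ 2 * (x * Real.sin α + y * Real.cos α) / (he * Real.sin α) := by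
  intro x y hx _ hy _
  have hsin : 0 < sin α := sin_pos_of_pos_of_lt_pi hα (by linarith [pi_pos])
  have hcos : 0 ≤ cos α := cos_nonneg_of_mem_Icc ⟨by linarith [pi_pos], hα2⟩
  calc (15 : ℝ) / 16 ≤ 2 * x / he := by rw [le_div_iff₀ hhe]; linarith
    _ ≤ _ := two_mul_div_le_of_cos_nonneg hhe hsin hcos x hy
end
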